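/- arXiv:1711.03615 — 3 statements merged into one kernel-verified Lean document; each statement's English description precedes it below -/
import Mathlib

section
/- For every real x, |cos x| ≤ 1 − 2·‖x/π‖² ≤ exp(−2·‖x/π‖²), where ‖y‖ denotes the distance from y to the nearest integer. -/
/-! Write `x = π (n + t)` with `n` the integer nearest to `x / π`, so that `|t| = ‖x / π‖ ≤ 1/2`.
Then `|cos x| = cos (π t)`, and the concavity bound `cos s ≤ 1 - (2 / π²) s²` on `[-π, π]`
gives `cos (π t) ≤ 1 - 2 t²`. The second inequality is `1 - u ≤ exp (-u)`. -/

open Real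

/-- Distance from a real number to the nearest integer. -/
noncomputable def intDist (y : ℝ) : ℝ := ⨅ N : ℤ, |y - (N : ℝ)|

theorem intDist_eq_abs_sub_round (y : ℝ) : intDist y = |y - round y| :=
  le_antisymm (ciInf_le ⟨0, by rintro _ ⟨N, rfl⟩; exact abs_nonneg _⟩ (round y))
    (le_ciInf (round_le y))

theorem abs_cos_sub_int_mul_pi (x : ℝ) (n : ℤ) : |cos (x - n * π)| = |cos x| := by
  rw [cos_sub_int_mul_pi, abs_mul, abs_neg_one_zpow, one_mul]

theorem cos_pi_mul_le_one_sub_two_mul_sq {t : ℝ} (ht : |t| ≤ 1) :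
    cos (π * t) ≤ 1 - 2 * t ^ 2 := by
  have hπt : |π * t| ≤ π := by
    rw [abs_mul, abs_of_pos pi_pos]
    exact mul_le_of_le_one_right pi_pos.le ht
  calc cos (π * t) ≤ 1 - 2 / π ^ 2 * (π * t) ^ 2 := cos_le_one_sub_mul_cos_sq hπt
    _ = 1 - 2 * t ^ 2 := by field_simp

theorem abs_cos_pi_mul_le_one_sub_two_mul_sq {t : ℝ} (ht : |t| ≤ 1 / 2) :
    |cos (π * t)| ≤ 1 - 2 * t ^ 2 := by
  obtain ⟨ht₁, ht₂⟩ := abs_le.mp ht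
  have hcos : 0 ≤ cos (π * t) :=
    cos_nonneg_of_mem_Icc ⟨by nlinarith [pi_pos], by nlinarith [pi_pos]⟩
  rw [abs_of_nonneg hcos]
  exact cos_pi_mul_le_one_sub_two_mul_sq (by linarith)

theorem abs_cos_le_one_sub_two_mul_intDist_sq (x : ℝ) :
    |cos x| ≤ 1 - 2 * intDist (x / π) ^ 2 := by
  set t := x / π - round (x / π)
  have hx : π * t = x - round (x / π) * π := by
    simp only [t]
    field_simp [pi_ne_zero]
  rw [intDist_eq_abs_sub_round, sq_abs, ← abs_cos_sub_int_mul_pi x (round (x / π)), ← hx]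
  exact abs_cos_pi_mul_le_one_sub_two_mul_sq (abs_sub_round _)

theorem abs_cos_le_one_sub_sq_le_exp (x : ℝ) :
    |Real.cos x| ≤ 1 - 2 * (intDist (x / π)) ^ 2 ∧
      1 - 2 * (intDist (x / π)) ^ 2 ≤ Real.exp (-(2 * (intDist (x / π)) ^ 2)) :=
  ⟨abs_cos_le_one_sub_two_mul_intDist_sq x, one_sub_le_exp_neg _⟩
end

section
/- Let f be analytic on an open set containing the closed disk B̄(z, R), and let 0 < r < R. If N(B(z,r)) denotes the number of zeros of f in the open disk B(z, r) counted with multiplicity, M := max_{w ∈ B̄(z,R)} |f(w)|, and m := max_{w ∈ B̄(z,r)} |f(w)| with m > 0, then N(B(z, r)) ≤ log(M/m) / log((R² + r²)/(2Rr)). -/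
/-!
Divide out the zeros of `f` in `B(z, r)` and replace each linear factor `w - a` by
`(R² - conj (a - z) (w - z)) / R`, which has the same modulus on the circle `‖w - z‖ = R`.
The new function `F` is analytic and `‖F‖ = ‖f‖ ≤ M` on that circle, so `‖F‖ ≤ M` on the closed
disk by the maximum principle. At a point `w₀ ∈ B̄(z, r)` with `‖f w₀‖ = m`, each new factor is
larger than the old one by a factor of at least `c = (R² + r²) / (2Rr)`, because `1 / c` is the
pseudo-hyperbolic diameter of `B̄(z, r)` inside `B(z, R)`. Hence `m c^N ≤ ‖F w₀‖ ≤ M`.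
-/

open Complex Metric Function ComplexConjugate

section FactorZeros

variable {𝕜 E : Type*} [NontriviallyNormedField 𝕜] [NormedAddCommGroup E] [NormedSpace 𝕜 E]
  {f : 𝕜 → E} {a b : 𝕜}

theorem analyticAt_dslope (hf : AnalyticAt 𝕜 f b) : AnalyticAt 𝕜 (dslope f a) b := by
  rcases eq_or_ne b a with rfl | hba
  · obtain ⟨p, hp⟩ := hf
    exact ⟨_, hp.has_fpower_series_dslope_fslope⟩
  · refine (((analyticAt_id.sub analyticAt_const).inv (sub_ne_zero.2 hba)).smul
      (hf.sub (analyticAt_const (v := f a)))).congr ?_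
    filter_upwards [dslope_eventuallyEq_slope_of_ne f hba] with w hw
    rw [hw, slope_def_module]
    rfl

theorem AnalyticOnNhd.iterate_dslope {U : Set 𝕜} (hf : AnalyticOnNhd 𝕜 f U) (n : ℕ) :
    AnalyticOnNhd 𝕜 ((swap dslope a)^[n] f) U := by
  induction n with
  | zero => exact hf
  | succ n ih =>
    rw [iterate_succ_apply']
    exact fun w hw => analyticAt_dslope (ih w hw)

theorem AnalyticAt.analyticOrderAt_dslope_add_one (hf : AnalyticAt 𝕜 f a) (ha : f a = 0) :
    analyticOrderAt (dslope f a) a + 1 = analyticOrderAt f a := by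
  have hfac : f = (· - a) • dslope f a := funext fun w => (sub_smul_dslope_of_zero ha w).symm
  conv_rhs => rw [hfac]
  rw [analyticOrderAt_smul (by fun_prop) (analyticAt_dslope hf), analyticOrderAt_id_sub_const_self,
    add_comm]

theorem AnalyticAt.iterate_dslope_apply_self_eq_zero {n : ℕ} (hf : AnalyticAt 𝕜 f a)
    (hn : (n : ℕ∞) ≤ analyticOrderAt f a) : ∀ k < n, (swap dslope a)^[k] f a = 0 := by
  induction n generalizing f with
  | zero => simp
  | succ n ih =>
    have ha : f a = 0 := apply_eq_zero_of_analyticOrderAt_ne_zero (by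
      intro h; rw [h] at hn; exact absurd hn (by simp))
    have hn' : (n : ℕ∞) ≤ analyticOrderAt (dslope f a) a := by
      rw [← hf.analyticOrderAt_dslope_add_one ha] at hn
      exact (ENat.add_le_add_iff_right ENat.one_ne_top).1 (by simpa using hn)
    rintro (_ | k) hk
    · exact ha
    · exact ih (analyticAt_dslope hf) hn' k (by omega)

theorem AnalyticAt.eq_pow_smul_iterate_dslope {n : ℕ} (hf : AnalyticAt 𝕜 f a)
    (hn : (n : ℕ∞) ≤ analyticOrderAt f a) (b : 𝕜) :
    f b = (b - a) ^ n • (swap dslope a)^[n] f b :=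
  (pow_sub_smul_iterate_dslope_of_zero n (hf.iterate_dslope_apply_self_eq_zero hn) b).symm

theorem analyticOrderAt_eq_of_eq_pow_smul {g : 𝕜 → E} {n : ℕ} (hg : AnalyticAt 𝕜 g b)
    (hab : b ≠ a) (hfg : ∀ w, f w = (w - a) ^ n • g w) :
    analyticOrderAt f b = analyticOrderAt g b := by
  have : f = (· - a) ^ n • g := funext hfg
  rw [this, analyticOrderAt_smul (by fun_prop) hg, analyticOrderAt_pow (by fun_prop),
    analyticOrderAt_id_sub_const_of_ne hab, smul_zero, zero_add]

theorem AnalyticOnNhd.exists_eq_prod_pow_smul {U : Set 𝕜} (hf : AnalyticOnNhd 𝕜 f U)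
    (s : Finset 𝕜) (n : 𝕜 → ℕ) (hn : ∀ a ∈ s, a ∈ U ∧ (n a : ℕ∞) ≤ analyticOrderAt f a) :
    ∃ g : 𝕜 → E, AnalyticOnNhd 𝕜 g U ∧ ∀ w, f w = (∏ a ∈ s, (w - a) ^ n a) • g w := by
  classical
  induction s using Finset.induction_on generalizing f with
  | empty => exact ⟨f, hf, by simp⟩
  | insert a t hat ih =>
    obtain ⟨haU, hna⟩ := hn a (Finset.mem_insert_self a t)
    have hg₁ := hf.iterate_dslope (a := a) (n a)
    have hfg₁ := AnalyticAt.eq_pow_smul_iterate_dslope (hf a haU) hna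
    obtain ⟨g, hg, hg₁g⟩ := ih hg₁ fun b hb => by
      obtain ⟨hbU, hnb⟩ := hn b (Finset.mem_insert_of_mem hb)
      refine ⟨hbU, ?_⟩
      rwa [← analyticOrderAt_eq_of_eq_pow_smul (hg₁ b hbU) (ne_of_mem_of_not_mem hb hat) hfg₁]
    refine ⟨g, hg, fun w => ?_⟩
    rw [Finset.prod_insert hat, mul_smul, ← hg₁g, ← hfg₁]

end FactorZeros

theorem pow_sum_mul_norm_prod_pow_le {ι 𝕜 : Type*} [NormedField 𝕜] {s : Finset ι} {x y : ι → 𝕜}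
    {c : ℝ} (hc : 0 ≤ c) (hxy : ∀ i ∈ s, c * ‖x i‖ ≤ ‖y i‖) (n : ι → ℕ) :
    c ^ (∑ i ∈ s, n i) * ‖∏ i ∈ s, x i ^ n i‖ ≤ ‖∏ i ∈ s, y i ^ n i‖ := by
  simp only [norm_prod, norm_pow, ← Finset.prod_pow_eq_pow_sum, ← Finset.prod_mul_distrib,
    ← mul_pow]
  exact Finset.prod_le_prod (fun i _ => by positivity)
    fun i hi => pow_le_pow_left₀ (by positivity) (hxy i hi) _

theorem Complex.norm_le_of_forall_mem_sphere_norm_le {E F : Type*} [NormedAddCommGroup E]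
    [NormedSpace ℂ E] [Nontrivial E] [NormedAddCommGroup F] [NormedSpace ℂ F] {f : E → F}
    {z : E} {R C : ℝ} (hf : DifferentiableOn ℂ f (closedBall z R)) (hR : R ≠ 0)
    (hC : ∀ w ∈ sphere z R, ‖f w‖ ≤ C) {w : E} (hw : w ∈ closedBall z R) : ‖f w‖ ≤ C :=
  norm_le_of_forall_mem_frontier_norm_le isBounded_ball (hf.diffContOnCl_ball subset_rfl)
    (by rwa [frontier_ball z hR]) (by rwa [closure_ball z hR])

theorem natCast_le_log_div_log_of_mul_pow_le {m M c : ℝ} {N : ℕ} (hm : 0 < m) (hc : 1 < c)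
    (h : m * c ^ N ≤ M) : (N : ℝ) ≤ Real.log (M / m) / Real.log c := by
  rw [le_div_iff₀ (Real.log_pos hc), ← Real.log_pow]
  exact Real.log_le_log (by positivity) ((le_div_iff₀' hm).2 h)

theorem norm_sq_ofReal_sq_sub_conj_mul (R : ℝ) (u v : ℂ) :
    ‖(R : ℂ) ^ 2 - conj v * u‖ ^ 2 =
      R ^ 2 * ‖u - v‖ ^ 2 + (R ^ 2 - ‖u‖ ^ 2) * (R ^ 2 - ‖v‖ ^ 2) := by
  apply Complex.ofReal_injective
  push_cast
  simp only [← Complex.mul_conj', map_sub, map_mul, map_pow, Complex.conj_ofReal, conj_conj]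
  ring

/-- `w - a` divided by the Blaschke factor `R (w - a) / (R² - conj (a - z) (w - z))` of
`B(z, R)` vanishing at `a`. -/
noncomputable def blaschkeQuotient (z : ℂ) (R : ℝ) (a w : ℂ) : ℂ :=
  ((R : ℂ) ^ 2 - conj (a - z) * (w - z)) / R

@[fun_prop]
theorem differentiable_blaschkeQuotient (z : ℂ) (R : ℝ) (a : ℂ) :
    Differentiable ℂ (blaschkeQuotient z R a) := by
  unfold blaschkeQuotient
  fun_prop

theorem norm_blaschkeQuotient_of_mem_sphere {z a w : ℂ} {R : ℝ} (hR : R ≠ 0)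
    (hw : w ∈ sphere z R) : ‖blaschkeQuotient z R a w‖ = ‖w - a‖ := by
  rw [mem_sphere_iff_norm] at hw
  have hsq := norm_sq_ofReal_sq_sub_conj_mul R (w - z) (a - z)
  rw [hw, sub_self, zero_mul, add_zero, sub_sub_sub_cancel_right, ← sq_abs R, ← mul_pow] at hsq
  rw [blaschkeQuotient, norm_div, norm_real, Real.norm_eq_abs,
    (sq_eq_sq₀ (norm_nonneg _) (by positivity)).1 hsq]
  field_simp [abs_ne_zero.2 hR]

theorem mul_norm_sub_le_norm_blaschkeQuotient {z a w : ℂ} {r R : ℝ} (hR : 0 < R) (hrR : r ≤ R)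
    (ha : a ∈ closedBall z r) (hw : w ∈ closedBall z r) :
    (R ^ 2 + r ^ 2) / (2 * R * r) * ‖w - a‖ ≤ ‖blaschkeQuotient z R a w‖ := by
  rw [mem_closedBall_iff_norm] at ha hw
  obtain rfl | hr := ((norm_nonneg _).trans ha).eq_or_lt
  · simp
  have hdist : ‖w - a‖ ≤ 2 * r := by
    rw [← sub_sub_sub_cancel_right w a z]
    linarith [norm_sub_le (w - z) (a - z)]
  have hsq := norm_sq_ofReal_sq_sub_conj_mul R (w - z) (a - z)
  rw [sub_sub_sub_cancel_right] at hsq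
  have hw' : R ^ 2 - r ^ 2 ≤ R ^ 2 - ‖w - z‖ ^ 2 := by gcongr
  have ha' : R ^ 2 - r ^ 2 ≤ R ^ 2 - ‖a - z‖ ^ 2 := by gcongr
  have hRr : 0 ≤ R ^ 2 - r ^ 2 := by nlinarith
  have key : (R ^ 2 - r ^ 2) ^ 2 * ‖w - a‖ ^ 2 ≤
      (2 * r) ^ 2 * ((R ^ 2 - ‖w - z‖ ^ 2) * (R ^ 2 - ‖a - z‖ ^ 2)) :=
    calc (R ^ 2 - r ^ 2) ^ 2 * ‖w - a‖ ^ 2 ≤ (R ^ 2 - r ^ 2) ^ 2 * (2 * r) ^ 2 := by gcongr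
      _ = (2 * r) ^ 2 * ((R ^ 2 - r ^ 2) * (R ^ 2 - r ^ 2)) := by ring
      _ ≤ _ := by gcongr; exact hRr.trans hw'
  have hsq' : ((R ^ 2 + r ^ 2) * ‖w - a‖) ^ 2 ≤
      (2 * r * ‖(R : ℂ) ^ 2 - conj (a - z) * (w - z)‖) ^ 2 := by
    rw [mul_pow (2 * r), hsq]
    nlinarith
  rw [blaschkeQuotient, norm_div, norm_real, Real.norm_eq_abs, abs_of_pos hR, div_mul_eq_mul_div,
    div_le_div_iff₀ (by positivity) hR]
  nlinarith [le_of_pow_le_pow_left₀ two_ne_zero (by positivity) hsq']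

theorem norm_prod_blaschkeQuotient_pow_mul_le {z : ℂ} {R M : ℝ} (hR : 0 < R) {s : Finset ℂ}
    {n : ℂ → ℕ} {g : ℂ → ℂ} (hg : DifferentiableOn ℂ g (closedBall z R))
    (hM : ∀ w ∈ sphere z R, ‖(∏ a ∈ s, (w - a) ^ n a) * g w‖ ≤ M) {w : ℂ}
    (hw : w ∈ closedBall z R) : ‖(∏ a ∈ s, blaschkeQuotient z R a w ^ n a) * g w‖ ≤ M := by
  refine Complex.norm_le_of_forall_mem_sphere_norm_le
    (f := fun w => (∏ a ∈ s, blaschkeQuotient z R a w ^ n a) * g w)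
    (DifferentiableOn.mul (by fun_prop) hg) hR.ne' (fun w hw => ?_) hw
  simpa only [norm_mul, norm_prod, norm_pow, norm_blaschkeQuotient_of_mem_sphere hR.ne' hw]
    using hM w hw

theorem jensen_zero_count_general (f : ℂ → ℂ) (z : ℂ) (r R : ℝ) (hr : 0 < r) (hrR : r < R)
    (U : Set ℂ) (hsub : closedBall z R ⊆ U)
    (hf : AnalyticOnNhd ℂ f U)
    (M m : ℝ)
    (hM : M = sSup ((fun w => ‖f w‖) '' closedBall z R))
    (hm : m = sSup ((fun w => ‖f w‖) '' closedBall z r))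
    (hm0 : 0 < m)
    (ord : ℂ → ℕ)
    (hord : ∀ w (hw : w ∈ U), (ord w : ℕ∞) = analyticOrderAt f w)
    (s : Finset ℂ)
    (hs : ∀ w : ℂ, w ∈ s ↔ w ∈ ball z r ∧ f w = 0) :
    ((∑ w ∈ s, ord w : ℕ) : ℝ) ≤ Real.log (M / m) / Real.log ((R ^ 2 + r ^ 2) / (2 * R * r)) := by
  have hR : 0 < R := hr.trans hrR
  have hrR' : closedBall z r ⊆ closedBall z R := closedBall_subset_closedBall hrR.le
  have hs_ball : ∀ a ∈ s, a ∈ closedBall z r := fun a ha =>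
    ball_subset_closedBall ((hs a).1 ha).1
  have hcont : ContinuousOn (fun w => ‖f w‖) (closedBall z R) := (hf.continuousOn.mono hsub).norm
  obtain ⟨w₀, hw₀, hmw₀⟩ := (isCompact_closedBall z r).exists_sSup_image_eq
    (nonempty_closedBall.2 hr.le) (hcont.mono hrR')
  have hfM : ∀ w ∈ closedBall z R, ‖f w‖ ≤ M := fun w hw =>
    hM ▸ le_csSup ((isCompact_closedBall z R).bddAbove_image hcont) ⟨w, hw, rfl⟩
  obtain ⟨g, hg, hfg⟩ := hf.exists_eq_prod_pow_smul s ord fun a ha =>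
    have haU := hsub (hrR' (hs_ball a ha))
    ⟨haU, (hord a haU).le⟩
  have hFM := norm_prod_blaschkeQuotient_pow_mul_le hR (hg.differentiableOn.mono hsub)
    (fun w hw => by simpa [hfg w] using hfM w (sphere_subset_closedBall hw)) (hrR' hw₀)
  have hmF : m * ((R ^ 2 + r ^ 2) / (2 * R * r)) ^ (∑ a ∈ s, ord a) ≤
      ‖(∏ a ∈ s, blaschkeQuotient z R a w₀ ^ ord a) * g w₀‖ := by
    rw [hm, hmw₀, hfg w₀, smul_eq_mul, norm_mul, norm_mul, mul_comm, ← mul_assoc]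
    gcongr
    exact pow_sum_mul_norm_prod_pow_le (by positivity)
      (fun a ha => mul_norm_sub_le_norm_blaschkeQuotient hR hrR.le (hs_ball a ha) hw₀) ord
  refine natCast_le_log_div_log_of_mul_pow_le hm0 ?_ (hmF.trans hFM)
  rw [one_lt_div (by positivity)]
  nlinarith [sq_pos_of_pos (sub_pos.2 hrR)]

/-- Quantitative Jensen inequality: the number of zeros (with multiplicity) of an
analytic function in `B(z, r)` is at most `log(M/m) / log((R²+r²)/(2Rr))`. -/
theorem jensen_zero_count (f : ℂ → ℂ) (z : ℂ) (r R : ℝ) (hr : 0 < r) (hrR : r < R)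
    (U : Set ℂ) (hU : IsOpen U) (hsub : closedBall z R ⊆ U)
    (hf : AnalyticOnNhd ℂ f U)
    (M m : ℝ)
    (hM : M = sSup ((fun w => ‖f w‖) '' closedBall z R))
    (hm : m = sSup ((fun w => ‖f w‖) '' closedBall z r))
    (hm0 : 0 < m)
    (ord : ℂ → ℕ)
    (hord : ∀ w (hw : w ∈ U), (ord w : ℕ∞) = analyticOrderAt f w)
    (s : Finset ℂ)
    (hs : ∀ w : ℂ, w ∈ s ↔ w ∈ ball z r ∧ f w = 0) :
    ((∑ w ∈ s, ord w : ℕ) : ℝ) ≤ Real.log (M / m) / Real.log ((R ^ 2 + r ^ 2) / (2 * R * r)) :=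
  jensen_zero_count_general f z r R hr hrR U hsub hf M m hM hm hm0 ord hord s hs
end

section
/- For |z| > 2 let x := ⌊|z|² − 1⌋ and S(z) := ∑_{i=0}^{∞} |z|^i/√(i!). Then S(z) ≤ 100·|z|²·e^{|z|²/2} for all |z| sufficiently large. -/
open Real

/-! With `q = r² / a < 1`, each term `r ^ i / √(i!)` is the geometric mean of the exponential
term `a ^ i / i!` and the geometric term `q ^ i`, so Cauchy–Schwarz bounds the series by
`√(e ^ a / (1 - q))`. Taking `a = r² + 2` gives `e · e ^ (r² / 2) · √((r² + 2) / 2)`. -/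

theorem Real.tsum_sqrt_mul_le_sqrt_mul_sqrt {ι : Type*} {f g : ι → ℝ} (hf : ∀ i, 0 ≤ f i)
    (hg : ∀ i, 0 ≤ g i) (hf_sum : Summable f) (hg_sum : Summable g) :
    ∑' i, √(f i * g i) ≤ √(∑' i, f i) * √(∑' i, g i) := by
  have hsq : ∀ {h : ι → ℝ}, (∀ i, 0 ≤ h i) → (fun i => √(h i) ^ (2 : ℝ)) = h := fun hh =>
    funext fun i => by rw [Real.rpow_two, Real.sq_sqrt (hh i)]
  have := Real.inner_le_Lp_mul_Lq_tsum_of_nonneg Real.HolderConjugate.two_two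
    (fun i => Real.sqrt_nonneg (f i)) (fun i => Real.sqrt_nonneg (g i))
    (by rwa [hsq hf]) (by rwa [hsq hg])
  simp only [hsq hf, hsq hg, ← Real.sqrt_mul (hf _)] at this
  simpa only [Real.sqrt_eq_rpow (∑' i, _)] using this

theorem Real.hasSum_pow_div_factorial (x : ℝ) :
    HasSum (fun n : ℕ => x ^ n / n.factorial) (exp x) :=
  Real.exp_eq_exp_ℝ ▸ NormedSpace.expSeries_div_hasSum_exp x

theorem Real.tsum_pow_div_sqrt_factorial_le {r a : ℝ} (hr : 0 ≤ r) (hra : r ^ 2 < a) :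
    ∑' i : ℕ, r ^ i / √(i.factorial : ℝ) ≤ √(exp a * (a / (a - r ^ 2))) := by
  have ha : 0 < a := (sq_nonneg r).trans_lt hra
  set q := r ^ 2 / a with hq
  have hq0 : 0 ≤ q := by positivity
  have hq1 : q < 1 := (div_lt_one ha).2 hra
  have hterm : ∀ i : ℕ, r ^ i / √(i.factorial : ℝ) = √(a ^ i / i.factorial * q ^ i) := by
    intro i
    have : a ^ i / i.factorial * q ^ i = (r ^ i) ^ 2 / i.factorial := by
      rw [hq, div_pow]; field_simp; ring
    rw [this, Real.sqrt_div' _ (Nat.cast_nonneg _), Real.sqrt_sq (pow_nonneg hr i)]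
  calc ∑' i : ℕ, r ^ i / √(i.factorial : ℝ)
      = ∑' i : ℕ, √(a ^ i / i.factorial * q ^ i) := tsum_congr hterm
    _ ≤ √(∑' i : ℕ, a ^ i / i.factorial) * √(∑' i : ℕ, q ^ i) :=
      Real.tsum_sqrt_mul_le_sqrt_mul_sqrt (fun i => by positivity) (fun i => by positivity)
        (Real.hasSum_pow_div_factorial a).summable (summable_geometric_of_lt_one hq0 hq1)
    _ = √(exp a * (a / (a - r ^ 2))) := by
      rw [(Real.hasSum_pow_div_factorial a).tsum_eq, tsum_geometric_of_lt_one hq0 hq1,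
        ← Real.sqrt_mul (exp_pos a).le, hq]
      congr 2
      field_simp [(sub_pos.2 hra).ne']

theorem flat_sum_bound :
    ∃ R : ℝ, ∀ z : ℂ, R ≤ ‖z‖ →
      (∑' i : ℕ, (‖z‖) ^ i / Real.sqrt (Nat.factorial i))
        ≤ 100 * (‖z‖) ^ 2 * Real.exp ((‖z‖) ^ 2 / 2) := by
  refine ⟨1, fun z hz => ?_⟩
  set r := ‖z‖
  have hexp_two : exp 2 < 3 ^ 2 := by
    rw [show (2 : ℝ) = (2 : ℕ) * 1 by norm_num, Real.exp_nat_mul]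
    gcongr
    exact Real.exp_one_lt_three
  have hpoly : exp 2 * ((r ^ 2 + 2) / 2) ≤ (100 * r ^ 2) ^ 2 := by
    nlinarith [one_le_pow₀ (n := 2) hz]
  calc ∑' i : ℕ, r ^ i / √(i.factorial : ℝ)
      ≤ √(exp (r ^ 2 + 2) * ((r ^ 2 + 2) / (r ^ 2 + 2 - r ^ 2))) :=
        Real.tsum_pow_div_sqrt_factorial_le (norm_nonneg z) (by linarith)
    _ = √(exp (r ^ 2 / 2) ^ 2 * (exp 2 * ((r ^ 2 + 2) / 2))) := by
        rw [add_sub_cancel_left, ← Real.exp_nat_mul, ← mul_assoc, ← Real.exp_add]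
        ring_nf
    _ ≤ √(exp (r ^ 2 / 2) ^ 2 * (100 * r ^ 2) ^ 2) := by gcongr
    _ = 100 * r ^ 2 * exp (r ^ 2 / 2) := by
        rw [← mul_pow, Real.sqrt_sq (by positivity), mul_comm]
end
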